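/- arXiv:2203.00910 — 6 statements merged into one kernel-verified Lean document; each statement's English description precedes it below -/
import Mathlib

section
/- If ξ* minimizes f_C(·, A) = Σ_{a∈A} min(d(·,a)^q, C) over M, then ξ* minimizes f(·, active(ξ*)) = Σ_{a∈active(ξ*)} d(·,a)^q over M, where active(ξ*) = {a ∈ A : d(ξ*,a)^q ≤ C}. -/
theorem cutoff_minimizer_solves_active {M : Type*} [MetricSpace M]
    (A : Finset M) (C q : ℝ) (hC : 0 < C) (hq : 1 ≤ q) (ξ : M)
    (hξ : ∀ y : M, ∑ a ∈ A, min (dist ξ a ^ q) C ≤ ∑ a ∈ A, min (dist y a ^ q) C) :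
    ∀ y : M, ∑ a ∈ A.filter (fun a => dist ξ a ^ q ≤ C), dist ξ a ^ q
      ≤ ∑ a ∈ A.filter (fun a => dist ξ a ^ q ≤ C), dist y a ^ q := by
  intro y
  have hsplit := Finset.sum_filter_add_sum_filter_not A
    (fun a => dist ξ a ^ q ≤ C) (fun a => min (dist ξ a ^ q) C)
  have hsplit' := Finset.sum_filter_add_sum_filter_not A
    (fun a => dist ξ a ^ q ≤ C) (fun a => min (dist y a ^ q) C)
  have h1 : ∑ a ∈ A.filter (fun a => dist ξ a ^ q ≤ C), min (dist ξ a ^ q) C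
      = ∑ a ∈ A.filter (fun a => dist ξ a ^ q ≤ C), dist ξ a ^ q := by
    apply Finset.sum_congr rfl
    intro a ha
    exact min_eq_left (Finset.mem_filter.mp ha).2
  have h2 : ∑ a ∈ A.filter (fun a => ¬ dist ξ a ^ q ≤ C), min (dist ξ a ^ q) C
      = ∑ a ∈ A.filter (fun a => ¬ dist ξ a ^ q ≤ C), C := by
    apply Finset.sum_congr rfl
    intro a ha
    exact min_eq_right (le_of_lt (lt_of_not_ge (Finset.mem_filter.mp ha).2))
  have h3 : ∑ a ∈ A.filter (fun a => dist ξ a ^ q ≤ C), min (dist y a ^ q) C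
      ≤ ∑ a ∈ A.filter (fun a => dist ξ a ^ q ≤ C), dist y a ^ q := by
    apply Finset.sum_le_sum
    intro a _
    exact min_le_left _ _
  have h4 : ∑ a ∈ A.filter (fun a => ¬ dist ξ a ^ q ≤ C), min (dist y a ^ q) C
      ≤ ∑ a ∈ A.filter (fun a => ¬ dist ξ a ^ q ≤ C), C := by
    apply Finset.sum_le_sum
    intro a _
    exact min_le_right _ _
  have key := hξ y
  rw [← hsplit, ← hsplit'] at key
  rw [h1, h2] at key
  linarith
end

section
/- If ξ* minimizes f_C(·, A) over M and η* minimizes f(·, active(ξ*)) = Σ_{a∈active(ξ*)} d(·,a)^q over M, then η* also minimizes f_C(·, A) over M. -/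
theorem active_minimizer_solves_cutoff {M : Type*} [MetricSpace M]
    (A : Finset M) (C q : ℝ) (hC : 0 < C) (hq : 1 ≤ q) (ξ η : M)
    (hξ : ∀ y : M, ∑ a ∈ A, min (dist ξ a ^ q) C ≤ ∑ a ∈ A, min (dist y a ^ q) C)
    (hη : ∀ y : M, ∑ a ∈ A.filter (fun a => dist ξ a ^ q ≤ C), dist η a ^ q
      ≤ ∑ a ∈ A.filter (fun a => dist ξ a ^ q ≤ C), dist y a ^ q) :
    ∀ y : M, ∑ a ∈ A, min (dist η a ^ q) C ≤ ∑ a ∈ A, min (dist y a ^ q) C := by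
  intro y
  refine le_trans ?_ (hξ y)
  have hsplit : ∀ z : M, ∑ a ∈ A, min (dist z a ^ q) C
      = ∑ a ∈ A.filter (fun a => dist ξ a ^ q ≤ C), min (dist z a ^ q) C
      + ∑ a ∈ A.filter (fun a => ¬ dist ξ a ^ q ≤ C), min (dist z a ^ q) C := by
    intro z; exact (Finset.sum_filter_add_sum_filter_not A _ _).symm
  rw [hsplit η, hsplit ξ]
  refine add_le_add ?_ ?_
  · calc ∑ a ∈ A.filter (fun a => dist ξ a ^ q ≤ C), min (dist η a ^ q) C
        ≤ ∑ a ∈ A.filter (fun a => dist ξ a ^ q ≤ C), dist η a ^ q :=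
          Finset.sum_le_sum fun a _ => min_le_left _ _
      _ ≤ ∑ a ∈ A.filter (fun a => dist ξ a ^ q ≤ C), dist ξ a ^ q := hη ξ
      _ = ∑ a ∈ A.filter (fun a => dist ξ a ^ q ≤ C), min (dist ξ a ^ q) C := by
          refine Finset.sum_congr rfl fun a ha => ?_
          exact (min_eq_left (Finset.mem_filter.mp ha).2).symm
  · refine Finset.sum_le_sum fun a ha => ?_
    have h := (Finset.mem_filter.mp ha).2
    have : min (dist ξ a ^ q) C = C := min_eq_right (le_of_not_ge h)
    rw [this]
    exact min_le_right _ _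
end

section
/- If the diameter of A exceeds 2C, q = 1, and d is a metric, then the optimal value of the cutoff problem is strictly smaller than the optimal value of the classical problem: min_x f_C(x) < min_x f(x). -/
theorem cutoff_strictly_better_q_one {M : Type*} [MetricSpace M]
    (A : Finset M) (C : ℝ) (hC : 0 < C)
    (hdiam : ∃ a ∈ A, ∃ b ∈ A, 2 * C < dist a b)
    (ξ η : M)
    (hξ : ∀ y : M, ∑ a ∈ A, dist ξ a ≤ ∑ a ∈ A, dist y a)
    (hη : ∀ y : M, ∑ a ∈ A, min (dist η a) C ≤ ∑ a ∈ A, min (dist y a) C) :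
    ∑ a ∈ A, min (dist η a) C < ∑ a ∈ A, dist ξ a := by
  obtain ⟨a, ha, b, hb, hab⟩ := hdiam
  -- some point is farther than C from ξ
  have hfar : ∃ c ∈ A, C < dist ξ c := by
    by_cases h : C < dist ξ a
    · exact ⟨a, ha, h⟩
    · refine ⟨b, hb, ?_⟩
      have htri : dist a b ≤ dist ξ a + dist ξ b := by
        rw [dist_comm ξ a]; exact dist_triangle a ξ b
      push_neg at h
      nlinarith
  obtain ⟨c, hc, hcC⟩ := hfar
  have hstrict : ∑ x ∈ A, min (dist ξ x) C < ∑ x ∈ A, dist ξ x := by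
    apply Finset.sum_lt_sum (fun x _ => min_le_left _ _) ⟨c, hc, ?_⟩
    simp [min_def, not_le.mpr hcC, hcC, le_of_lt hcC]
  exact lt_of_le_of_lt (hη ξ) hstrict
end

section
/- If the diameter of A exceeds 2·C^{1/q}, q > 1, and d is derived from a norm on ℝ^k, then min_x f_C(x) < min_x f(x), i.e., the cutoff strictly decreases the optimal value. -/
theorem cutoff_strictly_better_norm {E : Type*} [NormedAddCommGroup E] [NormedSpace ℝ E]
    (A : Finset E) (C q : ℝ) (hC : 0 < C) (hq : 1 < q)
    (hdiam : ∃ a ∈ A, ∃ b ∈ A, 2 * C ^ (1 / q) < dist a b)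
    (ξ η : E)
    (hξ : ∀ y : E, ∑ a ∈ A, dist ξ a ^ q ≤ ∑ a ∈ A, dist y a ^ q)
    (hη : ∀ y : E, ∑ a ∈ A, min (dist η a ^ q) C ≤ ∑ a ∈ A, min (dist y a ^ q) C) :
    ∑ a ∈ A, min (dist η a ^ q) C < ∑ a ∈ A, dist ξ a ^ q := by
  obtain ⟨a, ha, b, hb, hab⟩ := hdiam
  have hq0 : 0 < q := lt_trans one_pos hq
  have htri : dist a b ≤ dist ξ a + dist ξ b := by
    rw [dist_comm ξ a]; exact dist_triangle a ξ b
  have hfar : ∃ c ∈ A, C ^ (1/q) < dist ξ c := by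
    by_contra h
    push_neg at h
    have h1 := h a ha
    have h2 := h b hb
    linarith
  obtain ⟨c, hc, hcd⟩ := hfar
  have hCpow : (C ^ (1/q)) ^ q = C := by
    rw [← Real.rpow_mul hC.le, one_div_mul_cancel (ne_of_gt hq0), Real.rpow_one]
  have hclt : C < dist ξ c ^ q := by
    calc C = (C ^ (1/q)) ^ q := hCpow.symm
    _ < dist ξ c ^ q :=
      Real.rpow_lt_rpow (Real.rpow_nonneg hC.le _) hcd hq0
  have hstrict : ∑ x ∈ A, min (dist ξ x ^ q) C < ∑ x ∈ A, dist ξ x ^ q := by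
    apply Finset.sum_lt_sum (fun x _ => min_le_left _ _)
    exact ⟨c, hc, lt_of_le_of_lt (min_le_right _ _) hclt⟩
  exact lt_of_le_of_lt (hη ξ) hstrict
end

section
/- If C^{1/q} ≥ 2·diam(A), then every minimizer ξ* of f_C satisfies d(ξ*,a)^q ≤ C for all a ∈ A, and consequently min f_C = min f and the minimizer sets of f and f_C coincide. -/
private lemma large_cutoff_key {M : Type*} [MetricSpace M]
    (A : Finset M) (C q : ℝ) (hC : 0 < C) (hq : 1 ≤ q)
    (hdiam : ∀ a ∈ A, ∀ b ∈ A, 2 * dist a b ≤ C ^ (1 / q))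
    (x : M)
    (hx : ∀ y : M, ∑ a ∈ A, min (dist x a ^ q) C ≤ ∑ a ∈ A, min (dist y a ^ q) C) :
    ∀ a ∈ A, dist x a ^ q ≤ C := by
  by_contra h
  push_neg at h
  obtain ⟨a0, ha0, hgt⟩ := h
  have hqpos : 0 < q := lt_of_lt_of_le zero_lt_one hq
  have hq0 : q ≠ 0 := ne_of_gt hqpos
  have hd0 : C ^ (1 / q) < dist x a0 := by
    have h1 := Real.rpow_lt_rpow hC.le hgt (by positivity : (0:ℝ) < 1 / q)
    have h2 : (dist x a0 ^ q) ^ (1 / q) = dist x a0 := by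
      rw [one_div, Real.rpow_rpow_inv dist_nonneg hq0]
    rwa [h2] at h1
  have hCq : (C ^ (1 / q)) ^ q = C := by
    rw [one_div, Real.rpow_inv_rpow hC.le hq0]
  have hCqnn : (0:ℝ) ≤ C ^ (1 / q) / 2 := by positivity
  have hDleC : (C ^ (1 / q) / 2) ^ q ≤ C := by
    calc (C ^ (1 / q) / 2) ^ q ≤ (C ^ (1 / q)) ^ q :=
          Real.rpow_le_rpow hCqnn (by linarith [Real.rpow_nonneg hC.le (1/q)]) hqpos.le
      _ = C := hCq
  have hlt : ∑ a ∈ A, min (dist a0 a ^ q) C < ∑ a ∈ A, min (dist x a ^ q) C := by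
    apply Finset.sum_lt_sum
    · intro a ha
      have hba : dist a0 a ≤ C ^ (1 / q) / 2 := by
        have := hdiam a0 ha0 a ha; linarith
      have hxa : C ^ (1 / q) / 2 ≤ dist x a := by
        have ht := dist_triangle x a a0
        rw [dist_comm a a0] at ht
        linarith
      have hxq : (C ^ (1 / q) / 2) ^ q ≤ dist x a ^ q :=
        Real.rpow_le_rpow hCqnn hxa hqpos.le
      have haq : dist a0 a ^ q ≤ (C ^ (1 / q) / 2) ^ q :=
        Real.rpow_le_rpow dist_nonneg hba hqpos.le
      calc min (dist a0 a ^ q) C ≤ dist a0 a ^ q := min_le_left _ _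
        _ ≤ (C ^ (1 / q) / 2) ^ q := haq
        _ ≤ min (dist x a ^ q) C := le_min (by linarith) (by linarith)
    · refine ⟨a0, ha0, ?_⟩
      rw [dist_self, Real.zero_rpow hq0, min_eq_left hC.le, min_eq_right hgt.le]
      exact hC
  exact absurd (hx a0) (not_le.mpr hlt)

theorem large_cutoff_all_active {M : Type*} [MetricSpace M]
    (A : Finset M) (hA : A.Nonempty) (C q : ℝ) (hC : 0 < C) (hq : 1 ≤ q)
    (hdiam : ∀ a ∈ A, ∀ b ∈ A, 2 * dist a b ≤ C ^ (1 / q))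
    (ξ η : M)
    (hξ : ∀ y : M, ∑ a ∈ A, min (dist ξ a ^ q) C ≤ ∑ a ∈ A, min (dist y a ^ q) C)
    (hη : ∀ y : M, ∑ a ∈ A, dist η a ^ q ≤ ∑ a ∈ A, dist y a ^ q) :
    (∀ a ∈ A, dist ξ a ^ q ≤ C) ∧
    (∑ a ∈ A, min (dist ξ a ^ q) C = ∑ a ∈ A, dist η a ^ q) ∧
    (∀ x : M, (∀ y : M, ∑ a ∈ A, min (dist x a ^ q) C ≤ ∑ a ∈ A, min (dist y a ^ q) C) ↔
      (∀ y : M, ∑ a ∈ A, dist x a ^ q ≤ ∑ a ∈ A, dist y a ^ q)) := by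
  have hmin : ∀ z : M, ∑ a ∈ A, min (dist z a ^ q) C ≤ ∑ a ∈ A, dist z a ^ q :=
    fun z => Finset.sum_le_sum fun a _ => min_le_left _ _
  have hξall : ∀ a ∈ A, dist ξ a ^ q ≤ C :=
    large_cutoff_key A C q hC hq hdiam ξ hξ
  have hξeq : ∑ a ∈ A, min (dist ξ a ^ q) C = ∑ a ∈ A, dist ξ a ^ q :=
    Finset.sum_congr rfl fun a ha => min_eq_left (hξall a ha)
  have h2 : ∑ a ∈ A, min (dist ξ a ^ q) C = ∑ a ∈ A, dist η a ^ q := by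
    refine le_antisymm ((hξ η).trans (hmin η)) ?_
    rw [hξeq]; exact hη ξ
  refine ⟨hξall, h2, fun x => ⟨fun hx y => ?_, fun hx y => ?_⟩⟩
  · have hxall := large_cutoff_key A C q hC hq hdiam x hx
    have hxeq : ∑ a ∈ A, min (dist x a ^ q) C = ∑ a ∈ A, dist x a ^ q :=
      Finset.sum_congr rfl fun a ha => min_eq_left (hxall a ha)
    calc ∑ a ∈ A, dist x a ^ q = ∑ a ∈ A, min (dist x a ^ q) C := hxeq.symm
      _ ≤ ∑ a ∈ A, min (dist y a ^ q) C := hx y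
      _ ≤ ∑ a ∈ A, dist y a ^ q := hmin y
  · calc ∑ a ∈ A, min (dist x a ^ q) C ≤ ∑ a ∈ A, dist x a ^ q := hmin x
      _ ≤ ∑ a ∈ A, dist η a ^ q := hx η
      _ = ∑ a ∈ A, min (dist ξ a ^ q) C := h2.symm
      _ ≤ ∑ a ∈ A, min (dist y a ^ q) C := hξ y
end

section
/- Let mpd(A) = (1/(n(n−1)))·Σ_{i≠j} min(d(a_i,a_j)^q, C) for distinct points a_1,…,a_n. If α > (mpd(A)/C)·(n−1)/n, then there exists a point a ∈ A with f_C(a) < α·C·n, so the empty barycenter is not optimal. -/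
theorem empty_not_optimal_of_small_mpd {M : Type*} [MetricSpace M] [DecidableEq M]
    (A : Finset M) (hA : 2 ≤ A.card) (C q α : ℝ) (hC : 0 < C) (hq : 1 ≤ q) (hα0 : 0 < α)
    (hα : (1 / ((A.card : ℝ) * ((A.card : ℝ) - 1)) *
        ∑ i ∈ A, ∑ j ∈ A.erase i, min (dist i j ^ q) C) / C * (((A.card : ℝ) - 1) / A.card)
        < α) :
    ∃ a ∈ A, ∑ a' ∈ A, min (dist a a' ^ q) C < α * C * A.card := by
  set n : ℝ := (A.card : ℝ) with hn
  have hn2 : (2:ℝ) ≤ n := by rw [hn]; exact_mod_cast hA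
  have hn0 : n ≠ 0 := by linarith
  have hn1 : n - 1 ≠ 0 := by intro h; linarith [sub_eq_zero.mp h]
  set S : ℝ := ∑ i ∈ A, ∑ j ∈ A.erase i, min (dist i j ^ q) C with hS
  have key : (1 / (n * (n - 1)) * S) / C * ((n - 1) / n) = S / (C * n * n) := by
    field_simp
  rw [key, div_lt_iff₀ (by positivity)] at hα
  -- hα : S < α * (C * n * n)
  by_contra h
  push_neg at h
  have diag : ∀ a ∈ A, ∑ a' ∈ A, min (dist a a' ^ q) C
      = ∑ a' ∈ A.erase a, min (dist a a' ^ q) C := by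
    intro a ha
    rw [← Finset.sum_erase_add A _ ha, dist_self,
      Real.zero_rpow (by positivity : q ≠ 0), min_eq_left hC.le, add_zero]
  have hsum : n * (α * C * n) ≤ S := by
    calc n * (α * C * n) = ∑ _a ∈ A, α * C * n := by
          rw [Finset.sum_const, nsmul_eq_mul]
      _ ≤ ∑ a ∈ A, ∑ a' ∈ A, min (dist a a' ^ q) C := Finset.sum_le_sum (fun a ha => h a ha)
      _ = S := Finset.sum_congr rfl diag
  nlinarith
end
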